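/- arXiv:2301.05341 — 2 statements merged into one kernel-verified Lean document; each statement's English description precedes it below -/
import Mathlib

section
/- Let $(\Omega,\mathcal{F},\mathbb{P})$ be a probability space, $\theta_0\in\mathbb{R}$, and let $U, D$ be real random variables with $D > 0$ almost surely. Define $\widehat\theta = \theta_0 + U/D$ and, for a constant $\mathfrak{d} > 0$ with $\mathfrak{d} \leqslant m/2$ where $m = \mathbb{E}(D) > 0$, define $\widehat\theta^{\mathfrak{d}} = \widehat\theta\,\mathbf{1}_{D \geqslant \mathfrak{d}}$. Then $\mathbb{E}[(\widehat\theta^{\mathfrak{d}} - \theta_0)^2] \leqslant \frac{1}{\mathfrak{d}^2}\left(\mathbb{E}(U^2) + \theta_0^2\,\mathbb{E}[(D - m)^2]\right)$. -/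
open MeasureTheory

theorem truncated_estimator_risk_decomposition
    {Ω : Type*} [MeasurableSpace Ω] (μ : Measure Ω) [IsProbabilityMeasure μ]
    (U D : Ω → ℝ) (θ₀ m 𝔡 : ℝ)
    (hD : ∀ᵐ ω ∂μ, 0 < D ω)
    (hm : m = ∫ ω, D ω ∂μ) (hm0 : 0 < m)
    (h𝔡 : 0 < 𝔡) (h𝔡m : 𝔡 ≤ m / 2)
    (θhat θhat𝔡 : Ω → ℝ)
    (hθhat : ∀ ω, θhat ω = θ₀ + U ω / D ω)
    (hθhat𝔡 : ∀ ω, θhat𝔡 ω = θhat ω * Set.indicator {ω' | 𝔡 ≤ D ω'} 1 ω)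
    (hint : Integrable (fun ω => (θhat𝔡 ω - θ₀) ^ 2) μ)
    (hU2 : Integrable (fun ω => U ω ^ 2) μ)
    (hD2 : Integrable (fun ω => (D ω - m) ^ 2) μ) :
    ∫ ω, (θhat𝔡 ω - θ₀) ^ 2 ∂μ ≤
      1 / 𝔡 ^ 2 * ((∫ ω, U ω ^ 2 ∂μ) + θ₀ ^ 2 * ∫ ω, (D ω - m) ^ 2 ∂μ) := by
  have hbound : ∀ᵐ ω ∂μ, (θhat𝔡 ω - θ₀) ^ 2 ≤
      1 / 𝔡 ^ 2 * (U ω ^ 2 + θ₀ ^ 2 * (D ω - m) ^ 2) := by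
    filter_upwards [hD] with ω hDω
    by_cases h : 𝔡 ≤ D ω
    · have h1 : Set.indicator {ω' | 𝔡 ≤ D ω'} (1 : Ω → ℝ) ω = 1 := by
        simp [Set.indicator_of_mem, h]
      rw [hθhat𝔡, h1, mul_one, hθhat]
      have : θ₀ + U ω / D ω - θ₀ = U ω / D ω := by ring
      rw [this, div_pow]
      have hD2pos : (0:ℝ) < D ω ^ 2 := by positivity
      have h𝔡2 : 𝔡 ^ 2 ≤ D ω ^ 2 := by nlinarith
      calc U ω ^ 2 / D ω ^ 2 ≤ U ω ^ 2 / 𝔡 ^ 2 := by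
            apply div_le_div_of_nonneg_left (by positivity) (by positivity) h𝔡2
        _ ≤ 1 / 𝔡 ^ 2 * (U ω ^ 2 + θ₀ ^ 2 * (D ω - m) ^ 2) := by
            rw [div_eq_mul_inv, one_div]
            have : (0:ℝ) ≤ θ₀ ^ 2 * (D ω - m) ^ 2 := by positivity
            nlinarith [inv_pos.mpr (show (0:ℝ) < 𝔡 ^ 2 by positivity)]
    · have h0 : Set.indicator {ω' | 𝔡 ≤ D ω'} (1 : Ω → ℝ) ω = 0 := by
        simp [Set.indicator_of_notMem, h]
      rw [hθhat𝔡, h0, mul_zero]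
      have hlt : D ω < 𝔡 := not_le.mp h
      have hmd : 𝔡 ≤ m - D ω := by linarith
      have h𝔡2 : 𝔡 ^ 2 ≤ (D ω - m) ^ 2 := by nlinarith
      have h1 : (0:ℝ) ≤ U ω ^ 2 := by positivity
      have hinv : (0:ℝ) < (𝔡 ^ 2)⁻¹ := by positivity
      have : θ₀ ^ 2 ≤ 1 / 𝔡 ^ 2 * (θ₀ ^ 2 * (D ω - m) ^ 2) := by
        rw [one_div]
        rw [inv_mul_eq_div, le_div_iff₀ (by positivity)]
        nlinarith [sq_nonneg θ₀]
      calc (0 - θ₀) ^ 2 = θ₀ ^ 2 := by ring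
        _ ≤ 1 / 𝔡 ^ 2 * (θ₀ ^ 2 * (D ω - m) ^ 2) := this
        _ ≤ 1 / 𝔡 ^ 2 * (U ω ^ 2 + θ₀ ^ 2 * (D ω - m) ^ 2) := by
            apply mul_le_mul_of_nonneg_left (by linarith) (by positivity)
  have hintR : Integrable (fun ω => 1 / 𝔡 ^ 2 * (U ω ^ 2 + θ₀ ^ 2 * (D ω - m) ^ 2)) μ :=
    ((hU2.add (hD2.const_mul (θ₀ ^ 2))).const_mul _)
  calc ∫ ω, (θhat𝔡 ω - θ₀) ^ 2 ∂μ
      ≤ ∫ ω, 1 / 𝔡 ^ 2 * (U ω ^ 2 + θ₀ ^ 2 * (D ω - m) ^ 2) ∂μ :=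
        integral_mono_ae hint hintR hbound
    _ = 1 / 𝔡 ^ 2 * ((∫ ω, U ω ^ 2 ∂μ) + θ₀ ^ 2 * ∫ ω, (D ω - m) ^ 2 ∂μ) := by
        rw [integral_const_mul, integral_add hU2 (hD2.const_mul _), integral_const_mul]
end

section
/- Let $H \in (1/2,1)$, $T > 0$, $\sigma \neq 0$, $M \geqslant 0$, and let $g_1,\dots,g_N : [0,T] \to \mathbb{R}$ be continuous functions with $-M \leqslant g_i(u) \leqslant 0$ for all $u$ and $i$. Let $D > 0$, $I \in \mathbb{R}$, $\alpha_H = H(2H-1)$, $\overline\alpha_H = \frac{\alpha_H}{2H(2H+1)}$, and define $\Phi : \mathbb{R}_+ \to \mathbb{R}$ by $\Phi(r) = -\frac{\alpha_H\sigma^2}{NTD}\sum_{i=1}^N \int_0^T \int_0^t g_i(t)\exp\left[(r+I)\int_s^t g_i(u)\,du\right](t-s)^{2H-2}\,ds\,dt$. If $T^{2H}\frac{e^{M|I|T}}{D} \leqslant \frac{\mathfrak{c}}{\overline\alpha_H \sigma^2 M^2}$ for some $\mathfrak{c} \in (0,1)$, then $\Phi$ maps $\mathbb{R}_+$ into $\mathbb{R}_+$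 and is a $\mathfrak{c}$-Lipschitz contraction on $\mathbb{R}_+$; hence $\Phi$ has a unique fixed point in $\mathbb{R}_+$. -/
/-!
Write `J(s, t) = ∫ u in s..t, g u ∈ [-M (t - s), 0]`. Each double integral in `Φ` has a
nonpositive integrand, so `Φ ≥ 0`. Since `exp` is `1`-Lipschitz on `(-∞, 0]`, for `r, ρ ≥ 0`
the integrands at `r` and `ρ` differ by at most `M² e^{M|I|T} |r - ρ| (t - s)^{2H-1}`, and
integrating over the triangle `0 < s < t < T` gives the factor `T^{2H+1} / (2H (2H+1))`. The
hypothesis on `T` makes the resulting Lipschitz constant at most `c < 1`, and Banach's fixed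
point theorem on the complete set `[0, ∞)` gives the unique fixed point. Subtracting the double
integrals needs the inner integrals to be integrable in `t`: they are jointly measurable and
bounded by a multiple of `t^{2H-1}`.
-/

open MeasureTheory Set Function

section Kernel

variable {q : ℝ}

theorem intervalIntegral_nonpos {f : ℝ → ℝ} {a b : ℝ} (hab : a ≤ b)
    (hf : ∀ x ∈ Icc a b, f x ≤ 0) : ∫ x in a..b, f x ≤ 0 := by
  simpa using intervalIntegral.integral_nonneg hab fun x hx => neg_nonneg.2 (hf x hx)

theorem integral_sub_rpow (hq : -1 < q) (t : ℝ) :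
    ∫ s in (0 : ℝ)..t, (t - s) ^ q = t ^ (q + 1) / (q + 1) := by
  rw [intervalIntegral.integral_comp_sub_left (fun x : ℝ => x ^ q) t, sub_self, sub_zero,
    integral_rpow (Or.inl hq), Real.zero_rpow (by linarith), sub_zero]

theorem intervalIntegrable_sub_rpow (hq : -1 < q) (t : ℝ) :
    IntervalIntegrable (fun s => (t - s) ^ q) volume 0 t := by
  simpa using (intervalIntegral.intervalIntegrable_rpow' hq (a := t) (b := 0)).comp_sub_left t

theorem abs_integral_le_of_abs_le_mul_sub_rpow {f : ℝ → ℝ} {t B : ℝ} (hq : -1 < q)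
    (ht : 0 ≤ t) (hf : ∀ s ∈ Ioc 0 t, |f s| ≤ B * (t - s) ^ q) :
    |∫ s in (0 : ℝ)..t, f s| ≤ B * t ^ (q + 1) / (q + 1) :=
  calc |∫ s in (0 : ℝ)..t, f s| ≤ ∫ s in (0 : ℝ)..t, B * (t - s) ^ q :=
        intervalIntegral.norm_integral_le_of_norm_le (f := f) ht (ae_of_all _ hf)
          ((intervalIntegrable_sub_rpow hq t).const_mul B)
    _ = B * t ^ (q + 1) / (q + 1) := by
        rw [intervalIntegral.integral_const_mul, integral_sub_rpow hq, mul_div_assoc]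

theorem abs_integral_integral_le_of_abs_le_mul_sub_rpow {G : ℝ → ℝ → ℝ} {T B : ℝ}
    (hq : -1 < q) (hT : 0 ≤ T) (hG : ∀ t ∈ Ioc 0 T, ∀ s ∈ Ioc 0 t, |G t s| ≤ B * (t - s) ^ q) :
    |∫ t in (0 : ℝ)..T, ∫ s in (0 : ℝ)..t, G t s| ≤ B * T ^ (q + 2) / ((q + 1) * (q + 2)) := by
  have hinner : ∀ t ∈ Ioc 0 T, |∫ s in (0 : ℝ)..t, G t s| ≤ B / (q + 1) * t ^ (q + 1) :=
    fun t ht => (abs_integral_le_of_abs_le_mul_sub_rpow (B := B) hq ht.1.le (hG t ht)).trans_eq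
      (by ring)
  calc |∫ t in (0 : ℝ)..T, ∫ s in (0 : ℝ)..t, G t s|
      ≤ ∫ t in (0 : ℝ)..T, B / (q + 1) * t ^ (q + 1) :=
        intervalIntegral.norm_integral_le_of_norm_le (f := fun t => ∫ s in (0 : ℝ)..t, G t s) hT
          (ae_of_all _ hinner) ((intervalIntegral.intervalIntegrable_rpow' (r := q + 1) (a := 0)
            (b := T) (by linarith)).const_mul _)
    _ = B * T ^ (q + 2) / ((q + 1) * (q + 2)) := by
        rw [intervalIntegral.integral_const_mul, integral_rpow (Or.inl (by linarith)),
          Real.zero_rpow (by linarith), sub_zero, show q + 1 + 1 = q + 2 by ring]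
        exact div_mul_div_comm _ _ _ _

theorem StronglyMeasurable.intervalIntegral_zero {G : ℝ → ℝ → ℝ}
    (hG : StronglyMeasurable (uncurry G)) :
    StronglyMeasurable fun t => ∫ s in (0 : ℝ)..t, G t s := by
  have hind : ∀ S : Set (ℝ × ℝ), MeasurableSet S →
      StronglyMeasurable fun t => ∫ s, S.indicator (uncurry G) (t, s) :=
    fun S hS => (hG.indicator hS).integral_prod_right'
  have hpos := hind {p | 0 < p.2 ∧ p.2 ≤ p.1}
    ((measurableSet_lt measurable_const measurable_snd).inter
      (measurableSet_le measurable_snd measurable_fst))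
  have hneg := hind {p | p.1 < p.2 ∧ p.2 ≤ 0}
    ((measurableSet_lt measurable_fst measurable_snd).inter
      (measurableSet_le measurable_snd measurable_const))
  convert hpos.sub hneg using 1
  funext t
  rw [Pi.sub_apply, intervalIntegral, ← integral_indicator measurableSet_Ioc,
    ← integral_indicator measurableSet_Ioc]
  rfl

noncomputable def kernelIntegral (F : ℝ → ℝ → ℝ) (q T : ℝ) : ℝ :=
  ∫ t in (0 : ℝ)..T, ∫ s in (0 : ℝ)..t, F t s * (t - s) ^ q

variable {F F₁ F₂ : ℝ → ℝ → ℝ} {T : ℝ}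

theorem kernelIntegral_nonpos (hT : 0 ≤ T) (hF : ∀ t s, F t s ≤ 0) :
    kernelIntegral F q T ≤ 0 :=
  intervalIntegral_nonpos hT fun t ht =>
    intervalIntegral_nonpos ht.1 fun s hs =>
      mul_nonpos_of_nonpos_of_nonneg (hF t s) (Real.rpow_nonneg (sub_nonneg.2 hs.2) q)

theorem intervalIntegrable_mul_sub_rpow (hF : Continuous (uncurry F)) (hq : -1 < q) (t : ℝ) :
    IntervalIntegrable (fun s => F t s * (t - s) ^ q) volume 0 t :=
  (intervalIntegrable_sub_rpow hq t).continuousOn_mul (hF.uncurry_left t).continuousOn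

theorem intervalIntegrable_integral_mul_sub_rpow (hF : Continuous (uncurry F)) (hq : -1 < q)
    (hT : 0 ≤ T) :
    IntervalIntegrable (fun t => ∫ s in (0 : ℝ)..t, F t s * (t - s) ^ q) volume 0 T := by
  obtain ⟨B, hB⟩ := ((isCompact_Icc (a := 0) (b := T)).prod
    (isCompact_Icc (a := 0) (b := T))).exists_bound_of_continuousOn hF.continuousOn
  have hmeas : StronglyMeasurable (uncurry fun t s => F t s * (t - s) ^ q) :=
    (hF.measurable.mul ((measurable_fst.sub measurable_snd).pow_const q)).stronglyMeasurable
  refine (((Real.continuous_rpow_const (by linarith : 0 ≤ q + 1)).const_mul (B / (q + 1))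
    ).intervalIntegrable 0 T).mono_fun
    (StronglyMeasurable.intervalIntegral_zero hmeas).aestronglyMeasurable ?_
  rw [uIoc_of_le hT]
  refine (ae_restrict_mem measurableSet_Ioc).mono fun t ht => ?_
  refine (abs_integral_le_of_abs_le_mul_sub_rpow (B := B) hq ht.1.le fun s hs => ?_).trans ?_
  · rw [abs_mul, abs_of_nonneg (Real.rpow_nonneg (sub_nonneg.2 hs.2) q)]
    exact mul_le_mul_of_nonneg_right (hB (t, s) ⟨⟨ht.1.le, ht.2⟩, hs.1.le, hs.2.trans ht.2⟩)
      (Real.rpow_nonneg (sub_nonneg.2 hs.2) q)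
  · exact (le_of_eq (by ring)).trans (le_abs_self (B / (q + 1) * t ^ (q + 1)))

theorem kernelIntegral_sub (hF₁ : Continuous (uncurry F₁)) (hF₂ : Continuous (uncurry F₂))
    (hq : -1 < q) (hT : 0 ≤ T) :
    kernelIntegral F₁ q T - kernelIntegral F₂ q T =
      ∫ t in (0 : ℝ)..T, ∫ s in (0 : ℝ)..t, (F₁ t s - F₂ t s) * (t - s) ^ q := by
  rw [kernelIntegral, kernelIntegral, ← intervalIntegral.integral_sub
    (intervalIntegrable_integral_mul_sub_rpow hF₁ hq hT)
    (intervalIntegrable_integral_mul_sub_rpow hF₂ hq hT)]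
  congr 1 with t
  rw [← intervalIntegral.integral_sub (intervalIntegrable_mul_sub_rpow hF₁ hq t)
    (intervalIntegrable_mul_sub_rpow hF₂ hq t)]
  simp only [sub_mul]

theorem abs_kernelIntegral_sub_le {L : ℝ} (hF₁ : Continuous (uncurry F₁))
    (hF₂ : Continuous (uncurry F₂)) (hq : -1 < q) (hT : 0 ≤ T)
    (hL : ∀ t ∈ Ioc 0 T, ∀ s ∈ Ioc 0 t, |F₁ t s - F₂ t s| ≤ L * (t - s)) :
    |kernelIntegral F₁ q T - kernelIntegral F₂ q T| ≤
      L * T ^ (q + 3) / ((q + 2) * (q + 3)) := by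
  rw [kernelIntegral_sub hF₁ hF₂ hq hT]
  have h := abs_integral_integral_le_of_abs_le_mul_sub_rpow (q := q + 1) (B := L)
    (G := fun t s => (F₁ t s - F₂ t s) * (t - s) ^ q) (by linarith) hT fun t ht s hs => by
      have hts : 0 ≤ t - s := sub_nonneg.2 hs.2
      rw [abs_mul, abs_of_nonneg (Real.rpow_nonneg hts q), Real.rpow_add_one' hts (by linarith),
        mul_comm ((t - s) ^ q), ← mul_assoc]
      gcongr
      exact hL t ht s hs
  rwa [show q + 1 + 2 = q + 3 by ring, show q + 1 + 1 = q + 2 by ring] at h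

end Kernel

theorem abs_exp_sub_exp_le_of_nonpos {x y : ℝ} (hx : x ≤ 0) (hy : y ≤ 0) :
    |Real.exp x - Real.exp y| ≤ |x - y| := by
  wlog hyx : y ≤ x generalizing x y
  · rw [abs_sub_comm, abs_sub_comm x]
    exact this hy hx (le_of_not_ge hyx)
  have hexp : Real.exp x - Real.exp y = Real.exp x * (1 - Real.exp (y - x)) := by
    rw [mul_sub, mul_one, ← Real.exp_add, add_sub_cancel]
  have h1 : 1 - Real.exp (y - x) ≤ x - y := by linarith [Real.add_one_le_exp (y - x)]
  have h2 : 0 ≤ 1 - Real.exp (y - x) := sub_nonneg.2 (Real.exp_le_one_iff.2 (by linarith))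
  rw [hexp, abs_of_nonneg (mul_nonneg (Real.exp_pos x).le h2), abs_of_nonneg (by linarith)]
  calc Real.exp x * (1 - Real.exp (y - x)) ≤ 1 * (x - y) :=
        mul_le_mul (Real.exp_le_one_iff.2 hx) h1 h2 zero_le_one
    _ = x - y := one_mul _

theorem existsUnique_fixedPoint_of_lipschitzOnWith {α : Type*} [MetricSpace α] {f : α → α}
    {s : Set α} {K : NNReal} (hK : K < 1) (hs : IsComplete s) (hne : s.Nonempty)
    (hmaps : MapsTo f s s) (hf : LipschitzOnWith K f s) : ∃! x, x ∈ s ∧ f x = x := by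
  have hcontr : ContractingWith K (hmaps.restrict f s s) := ⟨hK, hf.mapsToRestrict hmaps⟩
  obtain ⟨x₀, hx₀⟩ := hne
  obtain ⟨x, hxs, hfx, -⟩ := hcontr.exists_fixedPoint' hs hmaps hx₀ (edist_ne_top _ _)
  refine ⟨x, ⟨hxs, hfx⟩, fun y ⟨hys, hfy⟩ => ?_⟩
  have := hcontr.fixedPoint_unique' (x := ⟨y, hys⟩) (y := ⟨x, hxs⟩) (Subtype.ext hfy)
    (Subtype.ext hfx)
  exact congrArg Subtype.val this

noncomputable def expWeight (g : ℝ → ℝ) (a t s : ℝ) : ℝ :=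
  g t * Real.exp (a * ∫ u in s..t, g u)

section ExpWeight

variable {g : ℝ → ℝ} {M : ℝ}

theorem continuous_expWeight (hg : Continuous g) (a : ℝ) :
    Continuous (uncurry (expWeight g a)) := by
  have hprim := intervalIntegral.continuous_primitive (μ := volume)
    (fun _ _ => hg.intervalIntegrable _ _) 0
  have hJ : (fun p : ℝ × ℝ => ∫ u in p.2..p.1, g u) =
      fun p => (∫ u in (0 : ℝ)..p.1, g u) - ∫ u in (0 : ℝ)..p.2, g u := by
    funext p
    rw [intervalIntegral.integral_interval_sub_left (hg.intervalIntegrable _ _)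
      (hg.intervalIntegrable _ _)]
  have hJc : Continuous fun p : ℝ × ℝ => ∫ u in p.2..p.1, g u := by
    rw [hJ]; exact (hprim.comp continuous_fst).sub (hprim.comp continuous_snd)
  exact (hg.comp continuous_fst).mul (Real.continuous_exp.comp (continuous_const.mul hJc))

theorem expWeight_nonpos (hg : ∀ u, g u ≤ 0) (a t s : ℝ) : expWeight g a t s ≤ 0 :=
  mul_nonpos_of_nonpos_of_nonneg (hg t) (Real.exp_pos _).le

theorem abs_expWeight_sub_le (hg : ∀ u, -M ≤ g u ∧ g u ≤ 0) {I r ρ T s t : ℝ} (hr : 0 ≤ r)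
    (hρ : 0 ≤ ρ) (hs : 0 ≤ s) (hst : s ≤ t) (htT : t ≤ T) :
    |expWeight g (r + I) t s - expWeight g (ρ + I) t s| ≤
      M ^ 2 * Real.exp (M * |I| * T) * |r - ρ| * (t - s) := by
  set J := ∫ u in s..t, g u
  have hM : 0 ≤ M := by linarith [hg 0]
  have hJ0 : J ≤ 0 := intervalIntegral_nonpos hst fun u _ => (hg u).2
  have hgM : ∀ u, |g u| ≤ M := fun u => (abs_of_nonpos (hg u).2).trans_le (neg_le.1 (hg u).1)
  have hJM : |J| ≤ M * (t - s) := by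
    simpa [abs_of_nonneg (sub_nonneg.2 hst)] using
      intervalIntegral.norm_integral_le_of_norm_le_const (f := g) (a := s) (b := t)
        fun u _ => hgM u
  have hIJ : Real.exp (I * J) ≤ Real.exp (M * |I| * T) := by
    refine Real.exp_le_exp.2 ((le_abs_self _).trans ?_)
    rw [abs_mul]
    calc |I| * |J| ≤ |I| * (M * T) := by gcongr; exact hJM.trans (by gcongr; linarith)
      _ = M * |I| * T := by ring
  have hrρ : |Real.exp (r * J) - Real.exp (ρ * J)| ≤ |r - ρ| * (M * (t - s)) := by
    refine (abs_exp_sub_exp_le_of_nonpos (mul_nonpos_of_nonneg_of_nonpos hr hJ0)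
      (mul_nonpos_of_nonneg_of_nonpos hρ hJ0)).trans ?_
    rw [← sub_mul, abs_mul]
    gcongr
  have hsplit : expWeight g (r + I) t s - expWeight g (ρ + I) t s =
      g t * (Real.exp (I * J) * (Real.exp (r * J) - Real.exp (ρ * J))) := by
    simp only [expWeight, add_mul, Real.exp_add]
    ring
  rw [hsplit, abs_mul, abs_mul, abs_of_pos (Real.exp_pos _)]
  calc |g t| * (Real.exp (I * J) * |Real.exp (r * J) - Real.exp (ρ * J)|)
      ≤ M * (Real.exp (M * |I| * T) * (|r - ρ| * (M * (t - s)))) := by gcongr; exact hgM t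
    _ = M ^ 2 * Real.exp (M * |I| * T) * |r - ρ| * (t - s) := by ring

theorem abs_kernelIntegral_expWeight_sub_le (hgc : Continuous g) (hg : ∀ u, -M ≤ g u ∧ g u ≤ 0)
    {H T I r ρ : ℝ} (hH : 1 / 2 < H) (hT : 0 ≤ T) (hr : 0 ≤ r) (hρ : 0 ≤ ρ) :
    |kernelIntegral (expWeight g (r + I)) (2 * H - 2) T -
        kernelIntegral (expWeight g (ρ + I)) (2 * H - 2) T| ≤
      M ^ 2 * Real.exp (M * |I| * T) * (T ^ (2 * H + 1) / (2 * H * (2 * H + 1))) * |r - ρ| := by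
  have h := abs_kernelIntegral_sub_le (q := 2 * H - 2) (continuous_expWeight hgc _)
    (continuous_expWeight hgc _) (by linarith) hT fun t ht s hs =>
      abs_expWeight_sub_le (I := I) hg hr hρ hs.1.le hs.2 ht.2
  rw [show 2 * H - 2 + 3 = 2 * H + 1 by ring, show 2 * H - 2 + 2 = 2 * H by ring] at h
  exact h.trans_eq (by ring)

end ExpWeight

theorem contraction_constant_le {H T σ M D I c αH ᾱH : ℝ} (N : ℕ) (hH : 1 / 2 < H) (hT : 0 < T)
    (hD : 0 < D) (hc : 0 ≤ c) (hα : αH = H * (2 * H - 1))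
    (hᾱ : ᾱH = αH / (2 * H * (2 * H + 1)))
    (hcond : T ^ (2 * H) * Real.exp (M * |I| * T) / D ≤ c / (ᾱH * σ ^ 2 * M ^ 2)) :
    αH * σ ^ 2 / (N * T * D) *
      (N * (M ^ 2 * Real.exp (M * |I| * T) * (T ^ (2 * H + 1) / (2 * H * (2 * H + 1))))) ≤ c := by
  have hᾱ0 : 0 ≤ ᾱH := by
    rw [hᾱ, hα]
    exact div_nonneg (mul_nonneg (by linarith) (by linarith))
      (mul_nonneg (by linarith) (by linarith))
  have hsmall := mul_le_of_le_div₀ hc (by positivity) hcond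
  -- `N / N` is `0` rather than `1` when `N = 0`
  calc _ = N / N * (T ^ (2 * H) * Real.exp (M * |I| * T) / D * (ᾱH * σ ^ 2 * M ^ 2)) := by
        rw [hᾱ, Real.rpow_add_one hT.ne']
        field_simp
    _ ≤ 1 * c := mul_le_mul (div_self_le_one _) hsmall (by positivity) zero_le_one
    _ = c := one_mul c

theorem fixed_point_existence_uniqueness_general
    (H T σ M D I c : ℝ) (N : ℕ)
    (hH1 : 1 / 2 < H) (hT : 0 < T)
    (hD : 0 < D) (hc : 0 < c) (hc1 : c < 1)
    (g : Fin N → ℝ → ℝ) (hgcont : ∀ i, Continuous (g i))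
    (hg : ∀ i, ∀ u, -M ≤ g i u ∧ g i u ≤ 0)
    (αH ᾱH : ℝ) (hα : αH = H * (2 * H - 1)) (hᾱ : ᾱH = αH / (2 * H * (2 * H + 1)))
    (Φ : ℝ → ℝ)
    (hΦ : ∀ r, Φ r = -(αH * σ ^ 2 / (N * T * D)) *
      ∑ i, ∫ t in (0:ℝ)..T, ∫ s in (0:ℝ)..t,
        g i t * Real.exp ((r + I) * ∫ u in s..t, g i u) * (t - s) ^ (2 * H - 2))
    (hcond : T ^ (2 * H) * Real.exp (M * |I| * T) / D ≤ c / (ᾱH * σ ^ 2 * M ^ 2)) :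
    (∀ r, 0 ≤ r → 0 ≤ Φ r) ∧
      (∀ r ρ, 0 ≤ r → 0 ≤ ρ → |Φ r - Φ ρ| ≤ c * |r - ρ|) ∧
        (∃! R : ℝ, 0 ≤ R ∧ Φ R = R) := by
  set κ := αH * σ ^ 2 / (N * T * D)
  set L := M ^ 2 * Real.exp (M * |I| * T) * (T ^ (2 * H + 1) / (2 * H * (2 * H + 1)))
  have hκ : 0 ≤ κ := by
    have : 0 < αH := by rw [hα]; exact mul_pos (by linarith) (by linarith)
    positivity
  have hΦ' : ∀ r, Φ r = -κ * ∑ i, kernelIntegral (expWeight (g i) (r + I)) (2 * H - 2) T := hΦ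
  have hnonneg : ∀ r, 0 ≤ Φ r := fun r => by
    rw [hΦ']
    exact mul_nonneg_of_nonpos_of_nonpos (neg_nonpos.2 hκ) (Finset.sum_nonpos fun i _ =>
      kernelIntegral_nonpos hT.le (expWeight_nonpos (fun u => (hg i u).2) _))
  have hlip : ∀ r ρ, 0 ≤ r → 0 ≤ ρ → |Φ r - Φ ρ| ≤ c * |r - ρ| := fun r ρ hr hρ =>
    calc |Φ r - Φ ρ| = κ * |∑ i, (kernelIntegral (expWeight (g i) (r + I)) (2 * H - 2) T -
          kernelIntegral (expWeight (g i) (ρ + I)) (2 * H - 2) T)| := by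
          rw [hΦ', hΦ', ← mul_sub, ← Finset.sum_sub_distrib, abs_mul, abs_neg, abs_of_nonneg hκ]
      _ ≤ κ * (N * (L * |r - ρ|)) := by
          gcongr
          refine (Finset.abs_sum_le_sum_abs _ _).trans ((Finset.sum_le_sum fun i _ =>
            abs_kernelIntegral_expWeight_sub_le (hgcont i) (hg i) hH1 hT.le hr hρ).trans_eq ?_)
          rw [Finset.sum_const, Finset.card_univ, Fintype.card_fin, nsmul_eq_mul]
      _ = κ * (N * L) * |r - ρ| := by ring
      _ ≤ c * |r - ρ| := by gcongr; exact contraction_constant_le N hH1 hT hD hc.le hα hᾱ hcond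
  refine ⟨fun r _ => hnonneg r, hlip, ?_⟩
  exact existsUnique_fixedPoint_of_lipschitzOnWith (K := ⟨c, hc.le⟩) hc1 isClosed_Ici.isComplete
    nonempty_Ici (fun r _ => hnonneg r)
    (LipschitzOnWith.of_dist_le_mul fun r hr ρ hρ => by
      rw [Real.dist_eq, Real.dist_eq]; exact hlip r ρ hr hρ)

theorem fixed_point_existence_uniqueness
    (H T σ M D I c : ℝ) (N : ℕ) (hN : 1 ≤ N)
    (hH1 : 1 / 2 < H) (hH2 : H < 1) (hT : 0 < T) (hσ : σ ≠ 0) (hM : 0 ≤ M)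
    (hD : 0 < D) (hc : 0 < c) (hc1 : c < 1)
    (g : Fin N → ℝ → ℝ) (hgcont : ∀ i, Continuous (g i))
    (hg : ∀ i, ∀ u, -M ≤ g i u ∧ g i u ≤ 0)
    (αH ᾱH : ℝ) (hα : αH = H * (2 * H - 1)) (hᾱ : ᾱH = αH / (2 * H * (2 * H + 1)))
    (Φ : ℝ → ℝ)
    (hΦ : ∀ r, Φ r = -(αH * σ ^ 2 / (N * T * D)) *
      ∑ i, ∫ t in (0:ℝ)..T, ∫ s in (0:ℝ)..t,
        g i t * Real.exp ((r + I) * ∫ u in s..t, g i u) * (t - s) ^ (2 * H - 2))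
    (hcond : T ^ (2 * H) * Real.exp (M * |I| * T) / D ≤ c / (ᾱH * σ ^ 2 * M ^ 2)) :
    (∀ r, 0 ≤ r → 0 ≤ Φ r) ∧
      (∀ r ρ, 0 ≤ r → 0 ≤ ρ → |Φ r - Φ ρ| ≤ c * |r - ρ|) ∧
        (∃! R : ℝ, 0 ≤ R ∧ Φ R = R) :=
  fixed_point_existence_uniqueness_general H T σ M D I c N hH1 hT hD hc hc1 g hgcont hg αH ᾱH hα hᾱ
    Φ hΦ hcond
end
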